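/- arXiv:2302.05960 — 4 statements merged into one kernel-verified Lean document; each statement's English description precedes it below -/
import Mathlib

section
/- Let G be a simple, undirected, connected graph with finite vertex set, let k be a positive integer, and let R be a k-truncated resolving set of G. If a is a vertex such that d(a,x) > k for all x ∈ R, then R ∪ {a} is a k-truncated dominating resolving set of G. -/
/-- The `k`-truncated distance: `min (d u v) (k+1)`. -/
noncomputable def truncDist {V : Type*} (G : SimpleGraph V) (k : ℕ) (u v : V) : ℕ :=
  min (G.dist u v) (k + 1)

/-- `S` is a `k`-truncated resolving set of `G`. -/
def IsTruncResolvingSet {V : Type*} (G : SimpleGraph V) (k : ℕ) (S : Set V) : Prop :=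
  ∀ u v : V, u ≠ v → ∃ w ∈ S, truncDist G k u w ≠ truncDist G k v w

/-- `S` is a `k`-truncated dominating resolving set of `G`. -/
def IsTruncDomResolvingSet {V : Type*} (G : SimpleGraph V) (k : ℕ) (S : Set V) : Prop :=
  IsTruncResolvingSet G k S ∧ ∀ u : V, ∃ x ∈ S, G.dist u x ≤ k

/-!
A vertex `u` that is more than `k` away from `a` and from every vertex of `R` has the same
truncated distance `k + 1` to every vertex of `R` as `a` has, so `R` could not resolve `u`
and `a`. Hence `a` together with `R` dominates every vertex, and adding `a` keeps `R` resolving.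
-/

section

variable {V : Type*} {G : SimpleGraph V} {k : ℕ}

lemma truncDist_eq_of_lt {u v : V} (h : k < G.dist u v) : truncDist G k u v = k + 1 :=
  min_eq_right h

lemma IsTruncResolvingSet.mono {S T : Set V} (hS : IsTruncResolvingSet G k S) (hST : S ⊆ T) :
    IsTruncResolvingSet G k T := fun u v huv ↦
  let ⟨w, hw, hne⟩ := hS u v huv
  ⟨w, hST hw, hne⟩

lemma IsTruncResolvingSet.exists_dist_le_of_forall_lt {R : Set V}
    (hR : IsTruncResolvingSet G k R) {a : V} (ha : ∀ x ∈ R, k < G.dist a x) {u : V}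
    (hua : k < G.dist u a) : ∃ x ∈ R, G.dist u x ≤ k := by
  by_contra! hu
  have hne : u ≠ a := by
    rintro rfl
    simp at hua
  obtain ⟨w, hw, hsep⟩ := hR u a hne
  exact hsep <| (truncDist_eq_of_lt (hu w hw)).trans (truncDist_eq_of_lt (ha w hw)).symm

end

theorem insert_undominated_isDomResolving_general {V : Type*} (G : SimpleGraph V)
    (k : ℕ) (R : Set V)
    (hR : IsTruncResolvingSet G k R) (a : V) (ha : ∀ x ∈ R, k < G.dist a x) :
    IsTruncDomResolvingSet G k (R ∪ {a}) := by
  refine ⟨hR.mono Set.subset_union_left, fun u ↦ ?_⟩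
  by_cases hua : G.dist u a ≤ k
  · exact ⟨a, Or.inr rfl, hua⟩
  · obtain ⟨x, hx, hux⟩ := hR.exists_dist_le_of_forall_lt ha (not_le.mp hua)
    exact ⟨x, Or.inl hx, hux⟩

theorem insert_undominated_isDomResolving {V : Type*} [Fintype V] (G : SimpleGraph V)
    (hG : G.Connected) (k : ℕ) (hk : 0 < k) (R : Set V)
    (hR : IsTruncResolvingSet G k R) (a : V) (ha : ∀ x ∈ R, k < G.dist a x) :
    IsTruncDomResolvingSet G k (R ∪ {a}) :=
  insert_undominated_isDomResolving_general G k R hR a ha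
end

section
/- Let G be a simple, undirected, connected graph with finite vertex set and let k be a positive integer. Let u, v, x, z1, z2 be vertices such that d(u,z1) = d(v,z1) + 1, d(u,z2) = d(v,z2) + 1, d(x,z1) ≤ k, d(x,z2) ≤ k, and (as integers) d(x,z1) − d(v,z1) ≠ d(x,z2) − d(v,z2). Then z1 k-distinguishes x and u, or z2 k-distinguishes x and u; i.e., d_k(x,z1) ≠ d_k(u,z1) or d_k(x,z2) ≠ d_k(u,z2). -/
/-! If both z₁ and z₂ failed to distinguish x from u, then, since x is within distance k of
them, u would be at the same distance from them as x; as u is one step farther than v from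
each zᵢ, both differences d(x, zᵢ) - d(v, zᵢ) would equal 1. -/

namespace SimpleGraph

variable {V : Type*} (G : SimpleGraph V) {k : ℕ} {x u z : V}

theorem truncDist_of_dist_le (h : G.dist x z ≤ k) : truncDist G k x z = G.dist x z :=
  min_eq_left (h.trans k.le_succ)

theorem dist_eq_of_truncDist_eq (h : G.dist x z ≤ k)
    (heq : truncDist G k x z = truncDist G k u z) : G.dist u z = G.dist x z := by
  rw [truncDist_of_dist_le G h] at heq
  unfold truncDist at heq
  omega

end SimpleGraph

theorem distinguish_parent_general {V : Type*} (G : SimpleGraph V)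
    (k : ℕ) (u v x z₁ z₂ : V)
    (h1 : G.dist u z₁ = G.dist v z₁ + 1) (h2 : G.dist u z₂ = G.dist v z₂ + 1)
    (h3 : G.dist x z₁ ≤ k) (h4 : G.dist x z₂ ≤ k)
    (h5 : (G.dist x z₁ : ℤ) - (G.dist v z₁ : ℤ) ≠ (G.dist x z₂ : ℤ) - (G.dist v z₂ : ℤ)) :
    truncDist G k x z₁ ≠ truncDist G k u z₁ ∨ truncDist G k x z₂ ≠ truncDist G k u z₂ := by
  by_contra! ⟨e1, e2⟩
  have d1 := G.dist_eq_of_truncDist_eq h3 e1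
  have d2 := G.dist_eq_of_truncDist_eq h4 e2
  omega

theorem distinguish_parent {V : Type*} [Fintype V] (G : SimpleGraph V)
    (hG : G.Connected) (k : ℕ) (hk : 0 < k) (u v x z₁ z₂ : V)
    (h1 : G.dist u z₁ = G.dist v z₁ + 1) (h2 : G.dist u z₂ = G.dist v z₂ + 1)
    (h3 : G.dist x z₁ ≤ k) (h4 : G.dist x z₂ ≤ k)
    (h5 : (G.dist x z₁ : ℤ) - (G.dist v z₁ : ℤ) ≠ (G.dist x z₂ : ℤ) - (G.dist v z₂ : ℤ)) :
    truncDist G k x z₁ ≠ truncDist G k u z₁ ∨ truncDist G k x z₂ ≠ truncDist G k u z₂ :=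
  distinguish_parent_general G k u v x z₁ z₂ h1 h2 h3 h4 h5
end

section
/- Let T be a finite tree, let k be a positive integer, let S be a k-truncated resolving set of T, and let r be a vertex with d(r,z) > k for all z ∈ S. Then for every connected component C of the forest obtained by deleting r from T: (i) every vertex x ∈ C satisfies d(x,z) ≤ k for some z ∈ S ∩ C, and (ii) for every pair of distinct vertices x, y ∈ C there is a vertex z ∈ S ∩ C with d_k(x,z) ≠ d_k(y,z). In other words, S ∩ C is a k-truncated dominating resolving set of the subtree induced on C (where distances within C agree with distances in T). -/
/-!
A vertex `z ∈ S` is more than `k` away from `r`, so a shortest walk from a vertex `x` with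
`d(x, z) ≤ k` to `z` cannot pass through `r`: it stays in the component of `x` in `T - r`.
Every vertex `x ≠ r` is `k`-distinguished from `r` by some `z ∈ S`, which forces `d(x, z) ≤ k`;
and a vertex `k`-distinguishing `x` from `y` lies within distance `k` of one of them.
-/

namespace SimpleGraph

variable {V : Type*} {G : SimpleGraph V}

lemma Walk.notMem_support_of_length_lt {r x z : V} (p : G.Walk x z)
    (h : p.length < G.dist r z) : r ∉ p.support := by
  classical
  exact fun hr => ((dist_le _).trans (p.length_dropUntil_le_length hr)).not_gt h

lemma Reachable.induce_compl_singleton_of_dist_lt {r : V} {x z : ({r}ᶜ : Set V)}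
    (hxz : G.Reachable x z) (h : G.dist x z < G.dist r z) :
    (G.induce ({r}ᶜ : Set V)).Reachable x z := by
  obtain ⟨p, hp⟩ := hxz.exists_walk_length_eq_dist
  have hsupport : ∀ w ∈ p.support, w ∈ ({r}ᶜ : Set V) := fun w hw hwr =>
    p.notMem_support_of_length_lt (hp ▸ h) (hwr ▸ hw)
  exact (p.induce _ hsupport).reachable

end SimpleGraph

lemma dist_le_or_dist_le_of_truncDist_ne {V : Type*} {G : SimpleGraph V} {k : ℕ} {u v w : V}
    (h : truncDist G k u w ≠ truncDist G k v w) : G.dist u w ≤ k ∨ G.dist v w ≤ k := by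
  unfold truncDist at h
  omega

theorem restriction_to_components_isDomResolving_general {V : Type*} (G : SimpleGraph V)
    (hT : G.IsTree) (k : ℕ) (S : Set V)
    (hS : IsTruncResolvingSet G k S) (r : V) (hr : ∀ z ∈ S, k < G.dist r z) :
    (∀ x : ({r}ᶜ : Set V), ∃ z : ({r}ᶜ : Set V), (z : V) ∈ S ∧
      (G.induce ({r}ᶜ : Set V)).Reachable x z ∧ G.dist (x : V) (z : V) ≤ k) ∧
    (∀ x y : ({r}ᶜ : Set V), (G.induce ({r}ᶜ : Set V)).Reachable x y → x ≠ y →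
      ∃ z : ({r}ᶜ : Set V), (z : V) ∈ S ∧ (G.induce ({r}ᶜ : Set V)).Reachable x z ∧
        truncDist G k (x : V) (z : V) ≠ truncDist G k (y : V) (z : V)) := by
  have hS_ne : ∀ z ∈ S, z ∈ ({r}ᶜ : Set V) := fun z hz (hzr : z = r) => by
    subst hzr
    simpa using hr z hz
  have hreach : ∀ (x : ({r}ᶜ : Set V)) (z : V) (hz : z ∈ S), G.dist x z ≤ k →
      (G.induce ({r}ᶜ : Set V)).Reachable x ⟨z, hS_ne z hz⟩ := fun x z hz hxz =>
    (hT.connected.preconnected _ _).induce_compl_singleton_of_dist_lt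
      (hxz.trans_lt (hr z hz))
  refine ⟨fun x => ?_, fun x y hxy hne => ?_⟩
  · obtain ⟨z, hzS, hz⟩ := hS x r x.2
    have hxz : G.dist x z ≤ k :=
      (dist_le_or_dist_le_of_truncDist_ne hz).resolve_right (hr z hzS).not_ge
    exact ⟨⟨z, hS_ne z hzS⟩, hzS, hreach x z hzS hxz, hxz⟩
  · obtain ⟨z, hzS, hz⟩ := hS x y (Subtype.coe_injective.ne hne)
    refine ⟨⟨z, hS_ne z hzS⟩, hzS, ?_, hz⟩
    rcases dist_le_or_dist_le_of_truncDist_ne hz with hxz | hyz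
    · exact hreach x z hzS hxz
    · exact hxy.trans (hreach y z hzS hyz)

/-- If `S` is a `k`-truncated resolving set of a tree `T` and `r` is a vertex that is
`k`-far from every element of `S`, then within each connected component `C` of the
forest obtained by deleting `r`, the set `S ∩ C` `k`-dominates and `k`-resolves `C`. -/
theorem restriction_to_components_isDomResolving {V : Type*} [Fintype V] (G : SimpleGraph V)
    (hT : G.IsTree) (k : ℕ) (hk : 0 < k) (S : Set V)
    (hS : IsTruncResolvingSet G k S) (r : V) (hr : ∀ z ∈ S, k < G.dist r z) :
    (∀ x : ({r}ᶜ : Set V), ∃ z : ({r}ᶜ : Set V), (z : V) ∈ S ∧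
      (G.induce ({r}ᶜ : Set V)).Reachable x z ∧ G.dist (x : V) (z : V) ≤ k) ∧
    (∀ x y : ({r}ᶜ : Set V), (G.induce ({r}ᶜ : Set V)).Reachable x y → x ≠ y →
      ∃ z : ({r}ᶜ : Set V), (z : V) ∈ S ∧ (G.induce ({r}ᶜ : Set V)).Reachable x z ∧
        truncDist G k (x : V) (z : V) ≠ truncDist G k (y : V) (z : V)) :=
  restriction_to_components_isDomResolving_general G hT k S hS r hr
end

section
/- Let T be a finite tree, let k be a positive integer, let r be a vertex of T, and let S ⊆ V \ {r} be a set of vertices such that d(r,z) > k for all z ∈ S. Suppose that for every connected component C of the forest obtained by deleting r from T: (i) every vertex x ∈ C satisfies d(x,z) ≤ k for some z ∈ S ∩ C, and (ii) for every pair of distinct vertices x, y ∈ C there is a vertex z ∈ S ∩ C with d_k(x,z) ≠ d_k(y,z). Then S is a k-truncated resolving set of T. -/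
namespace SimpleGraph

variable {V : Type*} {G : SimpleGraph V}

lemma dist_le_of_not_reachable_induce_compl_singleton (hG : G.Connected) {r x z : V}
    (hx : x ≠ r) (hz : z ≠ r) (hxz : ¬ (G.induce {r}ᶜ).Reachable ⟨x, hx⟩ ⟨z, hz⟩) :
    G.dist r z ≤ G.dist x z := by
  classical
  obtain ⟨p, hp⟩ := hG.exists_walk_length_eq_dist x z
  have hrp : r ∈ p.support := by
    by_contra hrp
    exact hxz (p.induce {r}ᶜ fun y hy hyr => hrp (hyr ▸ hy)).reachable
  calc G.dist r z ≤ (p.dropUntil r hrp).length := dist_le _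
    _ ≤ p.length := p.length_dropUntil_le_length hrp
    _ = G.dist x z := hp

end SimpleGraph

lemma truncDist_ne_of_dist_le_of_lt_dist {V : Type*} {G : SimpleGraph V} {k : ℕ} {u v w : V}
    (hu : G.dist u w ≤ k) (hv : k < G.dist v w) : truncDist G k u w ≠ truncDist G k v w := by
  unfold truncDist
  omega

theorem isResolving_of_components_general {V : Type*} (G : SimpleGraph V)
    (hT : G.IsTree) (k : ℕ) (r : V) (S : Set V)
    (hr : ∀ z ∈ S, k < G.dist r z)
    (hdom : ∀ x : ({r}ᶜ : Set V), ∃ z : ({r}ᶜ : Set V), (z : V) ∈ S ∧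
      (G.induce ({r}ᶜ : Set V)).Reachable x z ∧ G.dist (x : V) (z : V) ≤ k)
    (hres : ∀ x y : ({r}ᶜ : Set V), (G.induce ({r}ᶜ : Set V)).Reachable x y → x ≠ y →
      ∃ z : ({r}ᶜ : Set V), (z : V) ∈ S ∧ (G.induce ({r}ᶜ : Set V)).Reachable x z ∧
        truncDist G k (x : V) (z : V) ≠ truncDist G k (y : V) (z : V)) :
    IsTruncResolvingSet G k S := by
  have separate : ∀ u v : V, (hu : u ≠ r) →
      (∀ hv : v ≠ r, ¬ (G.induce {r}ᶜ).Reachable ⟨u, hu⟩ ⟨v, hv⟩) →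
      ∃ w ∈ S, truncDist G k u w ≠ truncDist G k v w := by
    intro u v hu huv
    obtain ⟨z, hzS, huz, hdist⟩ := hdom ⟨u, hu⟩
    refine ⟨z, hzS, truncDist_ne_of_dist_le_of_lt_dist hdist ?_⟩
    by_cases hv : v = r
    · exact hv ▸ hr z hzS
    · exact (hr z hzS).trans_le <| G.dist_le_of_not_reachable_induce_compl_singleton
        hT.connected hv z.2 fun hvz => huv hv (huz.trans hvz.symm)
  intro u v huv
  by_cases hu : u = r
  · obtain ⟨w, hwS, hw⟩ := separate v u (hu ▸ huv.symm) fun hur => absurd hu hur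
    exact ⟨w, hwS, hw.symm⟩
  by_cases hv : v = r
  · exact separate u v hu fun hvr => absurd hv hvr
  by_cases huv' : (G.induce {r}ᶜ).Reachable ⟨u, hu⟩ ⟨v, hv⟩
  · obtain ⟨z, hzS, -, hz⟩ := hres _ _ huv' (Subtype.coe_ne_coe.mp huv)
    exact ⟨z, hzS, hz⟩
  · exact separate u v hu fun _ => huv'

/-- If `r` is `k`-far from every element of `S ⊆ V \ {r}`, and within each connected
component `C` of the forest obtained by deleting `r` the set `S ∩ C` `k`-dominates and
`k`-resolves `C`, then `S` is a `k`-truncated resolving set of the tree `T`. -/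
theorem isResolving_of_components {V : Type*} [Fintype V] (G : SimpleGraph V)
    (hT : G.IsTree) (k : ℕ) (hk : 0 < k) (r : V) (S : Set V) (hrS : r ∉ S)
    (hr : ∀ z ∈ S, k < G.dist r z)
    (hdom : ∀ x : ({r}ᶜ : Set V), ∃ z : ({r}ᶜ : Set V), (z : V) ∈ S ∧
      (G.induce ({r}ᶜ : Set V)).Reachable x z ∧ G.dist (x : V) (z : V) ≤ k)
    (hres : ∀ x y : ({r}ᶜ : Set V), (G.induce ({r}ᶜ : Set V)).Reachable x y → x ≠ y →
      ∃ z : ({r}ᶜ : Set V), (z : V) ∈ S ∧ (G.induce ({r}ᶜ : Set V)).Reachable x z ∧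
        truncDist G k (x : V) (z : V) ≠ truncDist G k (y : V) (z : V)) :
    IsTruncResolvingSet G k S :=
  isResolving_of_components_general G hT k r S hr hdom hres
end
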